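/- arXiv:2003.05030 — 2 statements merged into one kernel-verified Lean document; each statement's English description precedes it below -/
import Mathlib

section
/- Let C > 0 and let W and W_n (n ∈ ℕ) be graphons with |W(u,v)| ≤ C and |W_n(u,v)| ≤ C for all u, v and all n. If ‖W_n − W‖_□ → 0 as n → ∞, then for every j ≥ 1, Λ_j(T_{W_n}) → Λ_j(T_W) and Λ_j(−T_{W_n}) → Λ_j(−T_W) as n → ∞. That is, for each fixed j, the j-th largest positive eigenvalue and the j-th smallest negative eigenvalue of the graphon operators converge (with the convention that missing eigenvalues are replaced by 0). -/
open MeasureTheory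

/-- The quadratic form `⟨T_W f, f⟩ = ∫∫ W(u,v) f(v) f(u) dv du` of the integral operator of `W`
on `L²([0,1])`. -/
noncomputable def quadForm (W : ℝ → ℝ → ℝ) (f : ℝ → ℝ) : ℝ :=
  ∫ u in Set.Icc (0 : ℝ) 1, (∫ v in Set.Icc (0 : ℝ) 1, W u v * f v) * f u

/-- The `j`-th Courant–Fischer value of the integral operator `T_W` on `L²([0,1])`:
`Λ_j(T_W) = sup` over `j`-dimensional subspaces `V` of `inf` over nonzero `f ∈ V` of the
Rayleigh quotient `⟨T_W f, f⟩ / ‖f‖²`. -/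
noncomputable def CF (W : ℝ → ℝ → ℝ) (j : ℕ) : ℝ :=
  ⨆ V : {V : Submodule ℝ (Lp ℝ 2 (volume.restrict (Set.Icc (0 : ℝ) 1))) //
      Module.finrank ℝ V = j},
    ⨅ f : {f : Lp ℝ 2 (volume.restrict (Set.Icc (0 : ℝ) 1)) // f ∈ V.1 ∧ f ≠ 0},
      quadForm W (f.1 : ℝ → ℝ) / ‖f.1‖ ^ 2

/-- The cut norm `‖U‖_□` of a kernel on `[0,1]²`: the supremum over measurable subsets `S, T` of
`[0,1]` of `|∫_S ∫_T U(u,v) du dv|`. -/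
noncomputable def cutNorm (U : ℝ → ℝ → ℝ) : ℝ :=
  ⨆ p : {p : Set ℝ × Set ℝ // MeasurableSet p.1 ∧ MeasurableSet p.2},
    |∫ u in p.1.1 ∩ Set.Icc (0 : ℝ) 1, ∫ v in p.1.2 ∩ Set.Icc (0 : ℝ) 1, U u v|

/-! For a kernel `U` bounded by `D` and functions `a, b` bounded by `M`, splitting `[0,1]` into
the sets where the partial integrals of `U` are positive or negative (once in each variable)
gives `|⟨a, T_U b⟩| ≤ 4 M² ‖U‖_□`. A general `f ∈ L²` is truncated at height `M ‖f‖`; the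
remainder has `L¹` norm at most `‖f‖ / M`, so `|⟨f, T_U f⟩| ≤ (4 M² ‖U‖_□ + 2 D / M) ‖f‖²`.
Applied to `U = W_n − W` this makes the Rayleigh quotients of `W_n` converge to those of `W`
uniformly, and a sup–inf of Rayleigh quotients moves by at most the uniform error. -/

open Set Filter Topology Function

local notation "𝕀" => Icc (0 : ℝ) 1
local notation "μ𝕀" => volume.restrict 𝕀
local notation "L²𝕀" => Lp ℝ 2 μ𝕀

instance : IsProbabilityMeasure μ𝕀 :=
  ⟨by simp [Real.volume_Icc]⟩

def KernelBoundedBy (U : ℝ → ℝ → ℝ) (D : ℝ) : Prop :=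
  ∀ u ∈ 𝕀, ∀ v ∈ 𝕀, |U u v| ≤ D

namespace KernelBoundedBy

variable {U V : ℝ → ℝ → ℝ} {D E : ℝ}

lemma nonneg (hU : KernelBoundedBy U D) : 0 ≤ D :=
  (abs_nonneg _).trans (hU 0 ⟨le_rfl, zero_le_one⟩ 0 ⟨le_rfl, zero_le_one⟩)

lemma neg (hU : KernelBoundedBy U D) : KernelBoundedBy (fun u v => -U u v) D :=
  fun u hu v hv => (abs_neg (U u v)).trans_le (hU u hu v hv)

lemma sub (hU : KernelBoundedBy U D) (hV : KernelBoundedBy V E) :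
    KernelBoundedBy (fun u v => U u v - V u v) (D + E) :=
  fun u hu v hv => (abs_sub _ _).trans (add_le_add (hU u hu v hv) (hV u hu v hv))

end KernelBoundedBy

lemma integral_abs_le_two_mul_of_forall_abs_setIntegral_le {α : Type*} [MeasurableSpace α]
    {μ : Measure α} {H : α → ℝ} (hH : Measurable H) (hHi : Integrable H μ) {β : ℝ}
    (hβ : ∀ A, MeasurableSet A → |∫ x in A, H x ∂μ| ≤ β) :
    ∫ x, |H x| ∂μ ≤ 2 * β := by
  have hpos := (le_abs_self _).trans (hβ {x | 0 ≤ H x} (measurableSet_le measurable_const hH))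
  have hneg := (neg_abs_le _).trans'
    (neg_le_neg (hβ {x | H x ≤ 0} (measurableSet_le hH measurable_const)))
  have h := integral_norm_eq_pos_sub_neg hHi
  simp only [Real.norm_eq_abs] at h
  linarith

lemma abs_integral_mul_le_of_forall_abs_setIntegral_le {α : Type*} [MeasurableSpace α]
    {μ : Measure α} {H c : α → ℝ} (hH : Measurable H) (hHi : Integrable H μ) {M β : ℝ}
    (hM : 0 ≤ M) (hc : ∀ x, |c x| ≤ M) (hβ : ∀ A, MeasurableSet A → |∫ x in A, H x ∂μ| ≤ β) :
    |∫ x, H x * c x ∂μ| ≤ 2 * M * β := by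
  have hbound : ∀ᵐ x ∂μ, ‖H x * c x‖ ≤ M * |H x| := ae_of_all _ fun x => by
    rw [Real.norm_eq_abs, abs_mul, mul_comm]
    exact mul_le_mul_of_nonneg_right (hc x) (abs_nonneg _)
  calc |∫ x, H x * c x ∂μ| ≤ ∫ x, M * |H x| ∂μ :=
        norm_integral_le_of_norm_le (hHi.abs.const_mul M) hbound
    _ = M * ∫ x, |H x| ∂μ := integral_const_mul M _
    _ ≤ M * (2 * β) := by
        gcongr; exact integral_abs_le_two_mul_of_forall_abs_setIntegral_le hH hHi hβ
    _ = 2 * M * β := by ring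

lemma abs_setIntegral_le_of_forall_mem {h : ℝ → ℝ} {D : ℝ} (A : Set ℝ)
    (hh : ∀ x ∈ 𝕀, |h x| ≤ D) : |∫ x in A, h x ∂μ𝕀| ≤ D := by
  have hD : 0 ≤ D := (abs_nonneg _).trans (hh 0 ⟨le_rfl, zero_le_one⟩)
  have hae : ∀ᵐ x ∂(μ𝕀).restrict A, ‖h x‖ ≤ D :=
    ae_restrict_of_ae (ae_restrict_of_forall_mem measurableSet_Icc hh)
  calc |∫ x in A, h x ∂μ𝕀|
      ≤ D * (μ𝕀).real A := norm_setIntegral_le_of_norm_le_const_ae (by finiteness) hae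
    _ ≤ D * 1 := by gcongr; exact measureReal_le_one
    _ = D := mul_one D

lemma integrable_of_forall_mem_abs_le {h : ℝ → ℝ} (hh : AEStronglyMeasurable h μ𝕀)
    {K : ℝ} (hK : ∀ x ∈ 𝕀, |h x| ≤ K) : Integrable h μ𝕀 :=
  .of_bound hh K (ae_restrict_of_forall_mem measurableSet_Icc hK)

lemma integral_sq_eq_norm_sq (f : L²𝕀) : ∫ x in 𝕀, f x ^ 2 = ‖f‖ ^ 2 := by
  rw [← real_inner_self_eq_norm_sq, L2.inner_def]
  refine integral_congr_ae (ae_of_all _ fun x => ?_)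
  simp [pow_two]

lemma integral_abs_le_norm (f : L²𝕀) : ∫ x in 𝕀, |f x| ≤ ‖f‖ := by
  have hvar := ProbabilityTheory.variance_nonneg |(f : ℝ → ℝ)| μ𝕀
  rw [ProbabilityTheory.variance_eq_sub (Lp.memLp f).abs] at hvar
  simp only [Pi.pow_apply, Pi.abs_apply, sq_abs, integral_sq_eq_norm_sq, sub_nonneg] at hvar
  exact (pow_le_pow_iff_left₀ (integral_nonneg fun _ => abs_nonneg _) (norm_nonneg f)
    two_ne_zero).1 hvar

lemma abs_max_min_le_abs {t : ℝ} (ht : 0 ≤ t) (x : ℝ) : |max (-t) (min t x)| ≤ |x| := by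
  grind [abs_le, le_abs_self, neg_abs_le]

lemma abs_sub_max_min_le {t : ℝ} (ht : 0 < t) (x : ℝ) : |x - max (-t) (min t x)| ≤ x ^ 2 / t := by
  rw [le_div_iff₀ ht]
  rcases le_total x (-t) with h | h
  · rw [min_eq_right (by linarith), max_eq_left h, abs_of_nonpos (by linarith)]
    nlinarith
  rcases le_total x t with h' | h'
  · rw [min_eq_right h', max_eq_right h, sub_self, abs_zero, zero_mul]
    positivity
  · rw [min_eq_left h', max_eq_right (by linarith), abs_of_nonneg (by linarith)]
    nlinarith

noncomputable def bilinForm (W : ℝ → ℝ → ℝ) (a b : ℝ → ℝ) : ℝ :=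
  ∫ u in 𝕀, (∫ v in 𝕀, W u v * b v) * a u

lemma quadForm_eq_bilinForm (W : ℝ → ℝ → ℝ) (f : ℝ → ℝ) : quadForm W f = bilinForm W f f := rfl

lemma quadForm_neg (W : ℝ → ℝ → ℝ) (φ : ℝ → ℝ) :
    quadForm (fun u v => -W u v) φ = -quadForm W φ := by
  simp only [quadForm, neg_mul, integral_neg]

section Kernel

variable {U : ℝ → ℝ → ℝ} {D : ℝ} {a b : ℝ → ℝ}

lemma integrable_uncurry_restrict_prod (hU : Measurable (uncurry U)) (hUb : KernelBoundedBy U D)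
    {S T : Set ℝ} (hS : MeasurableSet S) (hT : MeasurableSet T) :
    Integrable (uncurry U) (((μ𝕀).restrict S).prod ((μ𝕀).restrict T)) := by
  refine (integrable_const D).mono' hU.aestronglyMeasurable ?_
  rw [Measure.restrict_restrict hS, Measure.restrict_restrict hT, Measure.prod_restrict]
  filter_upwards [ae_restrict_mem ((hS.inter measurableSet_Icc).prod (hT.inter measurableSet_Icc))]
    with p hp
  exact hUb p.1 hp.1.2 p.2 hp.2.2

lemma abs_integral_rect_le_cutNorm (hUb : KernelBoundedBy U D) {S T : Set ℝ}
    (hS : MeasurableSet S) (hT : MeasurableSet T) :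
    |∫ u in S, ∫ v in T, U u v ∂μ𝕀 ∂μ𝕀| ≤ cutNorm U := by
  have hbdd : BddAbove (range fun p : {p : Set ℝ × Set ℝ //
      MeasurableSet p.1 ∧ MeasurableSet p.2} =>
      |∫ u in p.1.1 ∩ 𝕀, ∫ v in p.1.2 ∩ 𝕀, U u v|) := by
    refine ⟨D, forall_mem_range.2 fun p => ?_⟩
    rw [← Measure.restrict_restrict p.2.1, ← Measure.restrict_restrict p.2.2]
    exact abs_setIntegral_le_of_forall_mem _ fun u hu =>
      abs_setIntegral_le_of_forall_mem _ fun v hv => hUb u hu v hv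
  rw [Measure.restrict_restrict hS, Measure.restrict_restrict hT]
  exact le_ciSup hbdd ⟨(S, T), hS, hT⟩

lemma integrable_kernel_mul (hU : Measurable (uncurry U)) (hUb : KernelBoundedBy U D)
    (hb : Integrable b μ𝕀) {u : ℝ} (hu : u ∈ 𝕀) :
    Integrable (fun v => U u v * b v) μ𝕀 :=
  hb.bdd_mul hU.of_uncurry_left.aestronglyMeasurable
    (ae_restrict_of_forall_mem measurableSet_Icc fun v hv => hUb u hu v hv)

lemma abs_integral_kernel_mul_le (hUb : KernelBoundedBy U D)
    (hb : Integrable b μ𝕀) {u : ℝ} (hu : u ∈ 𝕀) :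
    |∫ v in 𝕀, U u v * b v| ≤ D * ∫ v in 𝕀, |b v| := by
  refine (norm_integral_le_of_norm_le (f := fun v => U u v * b v) (hb.abs.const_mul D)
    (ae_restrict_of_forall_mem measurableSet_Icc fun v hv => ?_)).trans_eq (integral_const_mul _ _)
  rw [Real.norm_eq_abs, abs_mul]
  exact mul_le_mul_of_nonneg_right (hUb u hu v hv) (abs_nonneg _)

lemma integrable_bilinForm_integrand (hU : Measurable (uncurry U)) (hUb : KernelBoundedBy U D)
    (ha : Integrable a μ𝕀) (hb : Integrable b μ𝕀) :
    Integrable (fun u => (∫ v in 𝕀, U u v * b v) * a u) μ𝕀 := by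
  have hm : AEStronglyMeasurable (fun p : ℝ × ℝ => U p.1 p.2 * b p.2)
      ((μ𝕀).prod μ𝕀) :=
    hU.aestronglyMeasurable.mul hb.1.comp_snd
  exact ha.bdd_mul hm.integral_prod_right'
    (ae_restrict_of_forall_mem measurableSet_Icc fun _ hu => abs_integral_kernel_mul_le hUb hb hu)

lemma bilinForm_add_left (hU : Measurable (uncurry U)) (hUb : KernelBoundedBy U D)
    {a₁ a₂ : ℝ → ℝ} (ha₁ : Integrable a₁ μ𝕀)
    (ha₂ : Integrable a₂ μ𝕀) (hb : Integrable b μ𝕀) :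
    bilinForm U (a₁ + a₂) b = bilinForm U a₁ b + bilinForm U a₂ b := by
  simp only [bilinForm, Pi.add_apply, mul_add]
  exact integral_add (integrable_bilinForm_integrand hU hUb ha₁ hb)
    (integrable_bilinForm_integrand hU hUb ha₂ hb)

lemma bilinForm_add_right (hU : Measurable (uncurry U)) (hUb : KernelBoundedBy U D)
    {b₁ b₂ : ℝ → ℝ} (ha : Integrable a μ𝕀)
    (hb₁ : Integrable b₁ μ𝕀) (hb₂ : Integrable b₂ μ𝕀) :
    bilinForm U a (b₁ + b₂) = bilinForm U a b₁ + bilinForm U a b₂ := by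
  rw [bilinForm, bilinForm, bilinForm, ← integral_add (integrable_bilinForm_integrand hU hUb ha hb₁)
    (integrable_bilinForm_integrand hU hUb ha hb₂)]
  refine setIntegral_congr_fun measurableSet_Icc fun u hu => ?_
  simp only [Pi.add_apply, mul_add]
  rw [integral_add (integrable_kernel_mul hU hUb hb₁ hu) (integrable_kernel_mul hU hUb hb₂ hu),
    add_mul]

lemma abs_bilinForm_le (hUb : KernelBoundedBy U D) (ha : Integrable a μ𝕀)
    (hb : Integrable b μ𝕀) :
    |bilinForm U a b| ≤ D * (∫ u in 𝕀, |a u|) * ∫ v in 𝕀, |b v| := by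
  rw [mul_right_comm]
  refine (norm_integral_le_of_norm_le (f := fun u => (∫ v in 𝕀, U u v * b v) * a u)
    (ha.abs.const_mul _)
    (ae_restrict_of_forall_mem measurableSet_Icc fun u hu => ?_)).trans_eq (integral_const_mul _ _)
  rw [Real.norm_eq_abs, abs_mul]
  exact mul_le_mul_of_nonneg_right (abs_integral_kernel_mul_le hUb hb hu) (abs_nonneg _)

lemma abs_bilinForm_le_cutNorm (hU : Measurable (uncurry U)) (hUb : KernelBoundedBy U D)
    {M : ℝ} (haM : ∀ x, |a x| ≤ M) (hb : Measurable b) (hbM : ∀ x, |b x| ≤ M) :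
    |bilinForm U a b| ≤ 4 * M ^ 2 * cutNorm U := by
  have hM : 0 ≤ M := (abs_nonneg _).trans (haM 0)
  have hbi : Integrable b μ𝕀 :=
    integrable_of_forall_mem_abs_le hb.aestronglyMeasurable fun x _ => hbM x
  have hUbm : Measurable (uncurry fun u v => U u v * b v) := hU.mul (hb.comp measurable_snd)
  have hUbb : KernelBoundedBy (fun u v => U u v * b v) (D * M) := fun u hu v hv => by
    rw [abs_mul]
    exact mul_le_mul (hUb u hu v hv) (hbM v) (abs_nonneg _) hUb.nonneg
  have hrow : ∀ A, MeasurableSet A →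
      |∫ u in A, (∫ v in 𝕀, U u v * b v) ∂μ𝕀| ≤ 2 * M * cutNorm U := by
    intro A hA
    have hint := integrable_uncurry_restrict_prod hUbm hUbb hA MeasurableSet.univ
    rw [Measure.restrict_univ] at hint
    rw [integral_integral_swap hint]
    simp_rw [integral_mul_const]
    refine abs_integral_mul_le_of_forall_abs_setIntegral_le
      hU.stronglyMeasurable.integral_prod_left.measurable
      (integrable_of_forall_mem_abs_le hU.stronglyMeasurable.integral_prod_left.aestronglyMeasurable
        fun v hv => abs_setIntegral_le_of_forall_mem A fun u hu => hUb u hu v hv)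
      hM hbM fun B hB => ?_
    rw [← integral_integral_swap (integrable_uncurry_restrict_prod hU hUb hA hB)]
    exact abs_integral_rect_le_cutNorm hUb hA hB
  calc |bilinForm U a b| ≤ 2 * M * (2 * M * cutNorm U) :=
        abs_integral_mul_le_of_forall_abs_setIntegral_le
          hUbm.stronglyMeasurable.integral_prod_right.measurable
          (integrable_of_forall_mem_abs_le
            hUbm.stronglyMeasurable.integral_prod_right.aestronglyMeasurable
            fun _ hu => abs_integral_kernel_mul_le hUb hbi hu)
          hM haM hrow
    _ = 4 * M ^ 2 * cutNorm U := by ring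

lemma abs_quadForm_le (hUb : KernelBoundedBy U D) (f : L²𝕀) : |quadForm U f| ≤ D * ‖f‖ ^ 2 := by
  have hf := (Lp.memLp f).integrable one_le_two
  calc |quadForm U f| ≤ D * (∫ x in 𝕀, |f x|) * ∫ x in 𝕀, |f x| := abs_bilinForm_le hUb hf hf
    _ ≤ D * ‖f‖ * ‖f‖ := by
        have := hUb.nonneg
        have := integral_abs_le_norm f
        gcongr
    _ = D * ‖f‖ ^ 2 := by ring

lemma abs_quadForm_add_le (hU : Measurable (uncurry U)) (hUb : KernelBoundedBy U D)
    {g r : ℝ → ℝ} {t : ℝ} (hg : Measurable g) (hgt : ∀ x, |g x| ≤ t)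
    (hri : Integrable r μ𝕀) :
    |quadForm U (g + r)| ≤ 4 * t ^ 2 * cutNorm U
      + D * (∫ x in 𝕀, |r x|) * ((∫ x in 𝕀, |g x|) + ∫ x in 𝕀, |(g + r) x|) := by
  have hgi : Integrable g μ𝕀 :=
    integrable_of_forall_mem_abs_le hg.aestronglyMeasurable fun x _ => hgt x
  rw [quadForm_eq_bilinForm, bilinForm_add_left hU hUb hgi hri (hgi.add hri),
    bilinForm_add_right hU hUb hgi hgi hri]
  have hgg := abs_bilinForm_le_cutNorm hU hUb hgt hg hgt
  have hgr := abs_bilinForm_le hUb hgi hri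
  have hrf := abs_bilinForm_le hUb hri (hgi.add hri)
  linarith [abs_add_three (bilinForm U g g) (bilinForm U g r) (bilinForm U r (g + r))]

lemma abs_quadForm_le_of_cutNorm (hU : Measurable (uncurry U)) (hUb : KernelBoundedBy U D)
    (f : L²𝕀) {M : ℝ} (hM : 0 < M) :
    |quadForm U f| ≤ (4 * M ^ 2 * cutNorm U + 2 * D / M) * ‖f‖ ^ 2 := by
  rcases (norm_nonneg f).eq_or_lt with hf0 | hfpos
  · simpa [← hf0] using abs_quadForm_le hUb f
  set t := M * ‖f‖
  have ht : 0 < t := mul_pos hM hfpos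
  set g : ℝ → ℝ := fun x => max (-t) (min t (f x))
  have hfm : Measurable f := (Lp.stronglyMeasurable f).measurable
  have hfi := (Lp.memLp f).integrable one_le_two
  have hg : Measurable g := measurable_const.max (measurable_const.min hfm)
  have hgt : ∀ x, |g x| ≤ t := fun x =>
    abs_le.2 ⟨le_max_left _ _, max_le (by linarith) (min_le_left _ _)⟩
  have hgi : Integrable g μ𝕀 :=
    integrable_of_forall_mem_abs_le hg.aestronglyMeasurable fun x _ => hgt x
  have hg1 : ∫ x in 𝕀, |g x| ≤ ‖f‖ :=
    (integral_mono hgi.abs hfi.abs fun x => abs_max_min_le_abs ht.le (f x)).trans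
      (integral_abs_le_norm f)
  have hr1 : ∫ x in 𝕀, |(f - g) x| ≤ ‖f‖ ^ 2 / t := by
    rw [← integral_sq_eq_norm_sq, ← integral_div]
    exact integral_mono (hfi.sub hgi).abs
      (((memLp_two_iff_integrable_sq (Lp.aestronglyMeasurable f)).1 (Lp.memLp f)).div_const t)
      fun x => abs_sub_max_min_le ht (f x)
  have hfgr : (f : ℝ → ℝ) = g + (f - g) := (add_sub_cancel g f).symm
  have key := abs_quadForm_add_le hU hUb hg hgt (hfi.sub hgi)
  rw [← hfgr] at key
  calc |quadForm U f| ≤ 4 * t ^ 2 * cutNorm U + D * (‖f‖ ^ 2 / t) * (‖f‖ + ‖f‖) := by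
        have := hUb.nonneg
        refine key.trans ?_
        gcongr
        exact integral_abs_le_norm f
    _ = (4 * M ^ 2 * cutNorm U + 2 * D / M) * ‖f‖ ^ 2 := by
        simp only [t]
        field_simp
        ring

end Kernel

lemma quadForm_sub {A B : ℝ → ℝ → ℝ} {DA DB : ℝ} (hA : Measurable (uncurry A))
    (hAb : KernelBoundedBy A DA) (hB : Measurable (uncurry B)) (hBb : KernelBoundedBy B DB)
    {φ : ℝ → ℝ} (hφ : Integrable φ μ𝕀) :
    quadForm (fun u v => A u v - B u v) φ = quadForm A φ - quadForm B φ := by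
  rw [quadForm, quadForm, quadForm, ← integral_sub (integrable_bilinForm_integrand hA hAb hφ hφ)
    (integrable_bilinForm_integrand hB hBb hφ hφ)]
  refine setIntegral_congr_fun measurableSet_Icc fun u hu => ?_
  simp only [sub_mul]
  rw [integral_sub (integrable_kernel_mul hA hAb hφ hu) (integrable_kernel_mul hB hBb hφ hu),
    sub_mul]

lemma eventually_abs_quadForm_le_of_tendsto_cutNorm {ι : Type*} {l : Filter ι}
    {U : ι → ℝ → ℝ → ℝ} {D : ℝ} (hU : ∀ i, Measurable (uncurry (U i)))
    (hUb : ∀ i, KernelBoundedBy (U i) D) (hcut : Tendsto (fun i => cutNorm (U i)) l (𝓝 0))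
    {ε : ℝ} (hε : 0 < ε) : ∀ᶠ i in l, ∀ f : L²𝕀, |quadForm (U i) f| ≤ ε * ‖f‖ ^ 2 := by
  set M := max 1 (4 * D / ε)
  have hM : 0 < M := zero_lt_one.trans_le (le_max_left _ _)
  have htail : 2 * D / M ≤ ε / 2 := by
    rw [div_le_iff₀ hM]
    linarith [(div_le_iff₀ hε).1 (le_max_right 1 (4 * D / ε))]
  filter_upwards [hcut.eventually (gt_mem_nhds (show 0 < ε / (8 * M ^ 2) by positivity))]
    with i hi f
  have hcutM : 4 * M ^ 2 * cutNorm (U i) ≤ ε / 2 :=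
    calc 4 * M ^ 2 * cutNorm (U i) ≤ 4 * M ^ 2 * (ε / (8 * M ^ 2)) := by gcongr
      _ = ε / 2 := by field_simp; ring
  refine (abs_quadForm_le_of_cutNorm (hU i) (hUb i) f hM).trans ?_
  gcongr
  linarith

lemma ciSup_ciInf_le_ciSup_ciInf_add {ι : Type*} {κ : ι → Type*} [∀ i, Nonempty (κ i)]
    {F G : (i : ι) → κ i → ℝ} {C ε : ℝ} (hε : 0 ≤ ε) (hF : ∀ i k, |F i k| ≤ C)
    (hG : ∀ i k, |G i k| ≤ C) (hFG : ∀ i k, F i k ≤ G i k + ε) :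
    ⨆ i, ⨅ k, F i k ≤ (⨆ i, ⨅ k, G i k) + ε := by
  rcases isEmpty_or_nonempty ι with hι | hι
  · -- an empty `⨆` is `0` in `ℝ`
    simpa using hε
  have hFbdd : ∀ i, BddBelow (range (F i)) := fun i =>
    ⟨-C, forall_mem_range.2 fun k => (abs_le.1 (hF i k)).1⟩
  have hGbdd : BddAbove (range fun i => ⨅ k, G i k) :=
    ⟨C, forall_mem_range.2 fun i => (ciInf_le ⟨-C, forall_mem_range.2 fun k =>
      (abs_le.1 (hG i k)).1⟩ (Classical.arbitrary _)).trans (abs_le.1 (hG i _)).2⟩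
  refine ciSup_le fun i => ?_
  have hinf : ⨅ k, F i k ≤ (⨅ k, G i k) + ε :=
    sub_le_iff_le_add.1 (le_ciInf fun k =>
      sub_le_iff_le_add.2 ((ciInf_le (hFbdd i) k).trans (hFG i k)))
  linarith [le_ciSup hGbdd i]

lemma CF_le_add {A B : ℝ → ℝ → ℝ} {C ε : ℝ} {j : ℕ} (hj : 1 ≤ j) (hε : 0 ≤ ε)
    (hA : ∀ f : L²𝕀, |quadForm A f| ≤ C * ‖f‖ ^ 2)
    (hB : ∀ f : L²𝕀, |quadForm B f| ≤ C * ‖f‖ ^ 2)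
    (hAB : ∀ f : L²𝕀, quadForm A f ≤ quadForm B f + ε * ‖f‖ ^ 2) :
    CF A j ≤ CF B j + ε := by
  have hne (V : {V : Submodule ℝ L²𝕀 // Module.finrank ℝ V = j}) :
      Nonempty {f : L²𝕀 // f ∈ V.1 ∧ f ≠ 0} := by
    obtain ⟨f, hf, hf0⟩ := Submodule.exists_mem_ne_zero_of_ne_bot (p := V.1) fun h => by
      have := V.2
      rw [h, finrank_bot] at this
      omega
    exact ⟨⟨f, hf, hf0⟩⟩
  have hpos {f : L²𝕀} (hf : f ≠ 0) : 0 < ‖f‖ ^ 2 := by positivity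
  have hrayleigh {W : ℝ → ℝ → ℝ} (hW : ∀ f : L²𝕀, |quadForm W f| ≤ C * ‖f‖ ^ 2) {f : L²𝕀}
      (hf : f ≠ 0) : |quadForm W f / ‖f‖ ^ 2| ≤ C := by
    rw [abs_div, abs_of_pos (hpos hf), div_le_iff₀ (hpos hf)]
    exact hW f
  unfold CF
  exact ciSup_ciInf_le_ciSup_ciInf_add
    (κ := fun V : {V : Submodule ℝ L²𝕀 // Module.finrank ℝ V = j} => {f : L²𝕀 // f ∈ V.1 ∧ f ≠ 0})
    (F := fun _ f => quadForm A f.1 / ‖f.1‖ ^ 2)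
    (G := fun _ f => quadForm B f.1 / ‖f.1‖ ^ 2) hε (fun _ f => hrayleigh hA f.2.2)
    (fun _ f => hrayleigh hB f.2.2) fun _ f => by
      rw [div_add' _ _ _ (hpos f.2.2).ne', div_le_div_iff_of_pos_right (hpos f.2.2)]
      exact hAB f

lemma tendsto_CF_of_uniform_quadForm {ι : Type*} {l : Filter ι} {A : ι → ℝ → ℝ → ℝ}
    {B : ℝ → ℝ → ℝ} {C : ℝ} {j : ℕ} (hj : 1 ≤ j)
    (hA : ∀ i, ∀ f : L²𝕀, |quadForm (A i) f| ≤ C * ‖f‖ ^ 2)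
    (hB : ∀ f : L²𝕀, |quadForm B f| ≤ C * ‖f‖ ^ 2)
    (hAB : ∀ ε > 0, ∀ᶠ i in l, ∀ f : L²𝕀, |quadForm (A i) f - quadForm B f| ≤ ε * ‖f‖ ^ 2) :
    Tendsto (fun i => CF (A i) j) l (𝓝 (CF B j)) := by
  refine Metric.tendsto_nhds.2 fun ε hε => ?_
  filter_upwards [hAB (ε / 2) (half_pos hε)] with i hi
  have h1 := CF_le_add hj (half_pos hε).le (hA i) hB fun f => by linarith [(abs_le.1 (hi f)).2]
  have h2 := CF_le_add hj (half_pos hε).le hB (hA i) fun f => by linarith [(abs_le.1 (hi f)).1]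
  rw [Real.dist_eq, abs_sub_lt_iff]
  constructor <;> linarith

theorem stmt8_general (C : ℝ) (W : ℝ → ℝ → ℝ) (Wn : ℕ → ℝ → ℝ → ℝ)
    (hWmeas : Measurable (Function.uncurry W))
    (hWnmeas : ∀ n, Measurable (Function.uncurry (Wn n)))
    (hWbdd : ∀ u ∈ Set.Icc (0 : ℝ) 1, ∀ v ∈ Set.Icc (0 : ℝ) 1, |W u v| ≤ C)
    (hWnbdd : ∀ n, ∀ u ∈ Set.Icc (0 : ℝ) 1, ∀ v ∈ Set.Icc (0 : ℝ) 1, |Wn n u v| ≤ C)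
    (hconv : Filter.Tendsto (fun n => cutNorm (fun u v => Wn n u v - W u v))
      Filter.atTop (nhds 0)) :
    ∀ j : ℕ, 1 ≤ j →
      Filter.Tendsto (fun n => CF (Wn n) j) Filter.atTop (nhds (CF W j)) ∧
      Filter.Tendsto (fun n => CF (fun u v => -(Wn n u v)) j) Filter.atTop
        (nhds (CF (fun u v => -(W u v)) j)) := by
  intro j hj
  have hform : ∀ ε > 0, ∀ᶠ n in atTop, ∀ f : L²𝕀,
      |quadForm (Wn n) f - quadForm W f| ≤ ε * ‖f‖ ^ 2 := fun ε hε => by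
    filter_upwards [eventually_abs_quadForm_le_of_tendsto_cutNorm
      (U := fun n u v => Wn n u v - W u v) (fun n => (hWnmeas n).sub hWmeas)
      (fun n => KernelBoundedBy.sub (hWnbdd n) hWbdd) hconv hε] with n hn f
    rw [← quadForm_sub (hWnmeas n) (hWnbdd n) hWmeas hWbdd ((Lp.memLp f).integrable one_le_two)]
    exact hn f
  have hform_neg : ∀ ε > 0, ∀ᶠ n in atTop, ∀ f : L²𝕀,
      |quadForm (fun u v => -Wn n u v) f - quadForm (fun u v => -W u v) f| ≤ ε * ‖f‖ ^ 2 :=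
    fun ε hε => (hform ε hε).mono fun n hn f => by
      rw [quadForm_neg, quadForm_neg, neg_sub_neg, abs_sub_comm]
      exact hn f
  exact ⟨tendsto_CF_of_uniform_quadForm hj (fun n => abs_quadForm_le (hWnbdd n))
      (abs_quadForm_le hWbdd) hform,
    tendsto_CF_of_uniform_quadForm hj (fun n => abs_quadForm_le (KernelBoundedBy.neg (hWnbdd n)))
      (abs_quadForm_le (KernelBoundedBy.neg hWbdd)) hform_neg⟩

/-- If uniformly bounded graphons `W_n` converge to `W` in cut norm, then for every `j ≥ 1` the
`j`-th largest positive eigenvalue and the `j`-th smallest negative eigenvalue (Courant–Fischer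
values of `T_{W_n}` and `−T_{W_n}`, with missing eigenvalues replaced by `0`) converge to those
of `W`. -/
theorem stmt8 (C : ℝ) (hC : 0 < C) (W : ℝ → ℝ → ℝ) (Wn : ℕ → ℝ → ℝ → ℝ)
    (hWmeas : Measurable (Function.uncurry W))
    (hWnmeas : ∀ n, Measurable (Function.uncurry (Wn n)))
    (hWsymm : ∀ u ∈ Set.Icc (0 : ℝ) 1, ∀ v ∈ Set.Icc (0 : ℝ) 1, W u v = W v u)
    (hWnsymm : ∀ n, ∀ u ∈ Set.Icc (0 : ℝ) 1, ∀ v ∈ Set.Icc (0 : ℝ) 1, Wn n u v = Wn n v u)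
    (hWbdd : ∀ u ∈ Set.Icc (0 : ℝ) 1, ∀ v ∈ Set.Icc (0 : ℝ) 1, |W u v| ≤ C)
    (hWnbdd : ∀ n, ∀ u ∈ Set.Icc (0 : ℝ) 1, ∀ v ∈ Set.Icc (0 : ℝ) 1, |Wn n u v| ≤ C)
    (hconv : Filter.Tendsto (fun n => cutNorm (fun u v => Wn n u v - W u v))
      Filter.atTop (nhds 0)) :
    ∀ j : ℕ, 1 ≤ j →
      Filter.Tendsto (fun n => CF (Wn n) j) Filter.atTop (nhds (CF W j)) ∧
      Filter.Tendsto (fun n => CF (fun u v => -(Wn n u v)) j) Filter.atTop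
        (nhds (CF (fun u v => -(W u v)) j)) :=
  stmt8_general C W Wn hWmeas hWnmeas hWbdd hWnbdd hconv
end

section
/- Let n ≥ 1 and let S be an n×n real symmetric matrix with eigenvalues μ_1(S) ≥ μ_2(S) ≥ … ≥ μ_n(S) (counted with multiplicity), and let W_G be the graphon induced by S. Then for every 1 ≤ j ≤ n, Λ_j(T_{W_G}) = max(μ_j(S)/n, 0), and for every j > n, Λ_j(T_{W_G}) = 0. -/
/-!
On step functions constant on the blocks `I_k`, `T_{W_G}` acts as `S / n`: writing `e_i` for the
step function `√n · v_i(k)` on `I_k` of the `i`-th unit eigenvector, the `e_i` are orthonormal and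
`⟨T_{W_G} f, f⟩ = ∑ᵢ (μᵢ / n) ⟨eᵢ, f⟩²`, a form that vanishes on the orthogonal complement of the
`e_i`, which is infinite-dimensional. For such a finite-rank form Courant–Fischer is elementary.
Every `(j+1)`-dimensional subspace contains a nonzero `f ⊥ e_0, …, e_{j-1}`, and Bessel's
inequality bounds its Rayleigh quotient by `max(μ_j / n, 0)`; the span of `e_0, …, e_j` and a
`(j+1)`-dimensional subspace of the complement give the matching lower bounds `μ_j / n` and `0`.
-/

open MeasureTheory

/-- Index of the interval `I_k` of the `n`-part equipartition of `[0,1]` that contains `u`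
(0-indexed): `I_k = [k/n, (k+1)/n)` for `k < n - 1` and `I_{n-1} = [(n-1)/n, 1]`. -/
noncomputable def idx (n : ℕ) (hn : 0 < n) (u : ℝ) : Fin n :=
  ⟨min (n - 1) ⌊n * u⌋₊, lt_of_le_of_lt (min_le_left _ _) (Nat.sub_lt hn Nat.one_pos)⟩

/-- The graphon induced by an `n × n` matrix `S`: `W_G(u,v) = S_{kl}` for `u ∈ I_k`, `v ∈ I_l`. -/
noncomputable def inducedGraphon (n : ℕ) (hn : 0 < n) (S : Matrix (Fin n) (Fin n) ℝ)
    (u v : ℝ) : ℝ :=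
  S (idx n hn u) (idx n hn v)

open Set Module RealInnerProductSpace Matrix

local notation "L²[0,1]" => Lp ℝ 2 (volume.restrict (Icc (0 : ℝ) 1))

lemma exists_submodule_le_ker_finrank_eq {K M N : Type*} [Field K] [AddCommGroup M] [Module K M]
    [AddCommGroup N] [Module K N] [Module.Finite K N] (hM : ¬ Module.Finite K M)
    (L : M →ₗ[K] N) (j : ℕ) : ∃ V : Submodule K M, V ≤ LinearMap.ker L ∧ finrank K V = j := by
  have hker : ¬ Module.Finite K (LinearMap.ker L) := fun _ => by
    have : Module.Finite K (M ⧸ LinearMap.ker L) := .equiv L.quotKerEquivRange.symm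
    exact hM (.of_submodule_quotient (LinearMap.ker L))
  rw [← rank_lt_aleph0_iff, not_lt] at hker
  obtain ⟨g, hg⟩ :=
    exists_linearIndependent_of_le_rank ((Cardinal.natCast_lt_aleph0 (n := j)).le.trans hker)
  refine ⟨Submodule.span K (range ((LinearMap.ker L).subtype ∘ g)), ?_, ?_⟩
  · rw [Submodule.span_le]
    rintro _ ⟨m, rfl⟩
    exact (g m).2
  · rw [finrank_span_eq_card (hg.map' _ (Submodule.ker_subtype _)), Fintype.card_fin]

section CourantFischer

variable {E : Type*} [NormedAddCommGroup E] [InnerProductSpace ℝ E]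

noncomputable def courantFischer (Q : E → ℝ) (j : ℕ) : ℝ :=
  ⨆ V : {V : Submodule ℝ E // finrank ℝ V = j}, ⨅ f : {f : E // f ∈ V.1 ∧ f ≠ 0}, Q f.1 / ‖f.1‖ ^ 2

section FiniteIndex

variable {ι : Type*} [Fintype ι]

noncomputable def finiteRankForm (e : ι → E) (c : ι → ℝ) (f : E) : ℝ :=
  ∑ i, c i * ⟪e i, f⟫ ^ 2

variable {e : ι → E} {c : ι → ℝ}

lemma abs_finiteRankForm_div_le (he : Orthonormal ℝ e) (f : E) :
    |finiteRankForm e c f / ‖f‖ ^ 2| ≤ ∑ i, |c i| := by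
  rcases eq_or_ne f 0 with rfl | hf
  · simpa using Finset.sum_nonneg fun i _ => abs_nonneg (c i)
  have hpos : 0 < ‖f‖ ^ 2 := by positivity
  rw [abs_div, abs_of_pos hpos, div_le_iff₀ hpos, finiteRankForm, Finset.sum_mul]
  refine (Finset.abs_sum_le_sum_abs _ _).trans (Finset.sum_le_sum fun i _ => ?_)
  rw [abs_mul, abs_sq]
  refine mul_le_mul_of_nonneg_left ?_ (abs_nonneg _)
  calc ⟪e i, f⟫ ^ 2 = |⟪e i, f⟫| ^ 2 := (sq_abs _).symm
    _ ≤ ‖f‖ ^ 2 := by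
      gcongr
      simpa [he.1 i] using abs_real_inner_le_norm (e i) f

lemma finiteRankForm_le_of_inner_eq_zero (he : Orthonormal ℝ e) {t : Finset ι} {M : ℝ}
    (hM : 0 ≤ M) (hc : ∀ i ∉ t, c i ≤ M) {f : E} (hf : ∀ i ∈ t, ⟪e i, f⟫ = 0) :
    finiteRankForm e c f ≤ M * ‖f‖ ^ 2 := by
  have hbessel : ∑ i, ⟪e i, f⟫ ^ 2 ≤ ‖f‖ ^ 2 := by
    simpa [Real.norm_eq_abs, sq_abs] using he.sum_inner_products_le (s := Finset.univ) f
  calc finiteRankForm e c f ≤ ∑ i, M * ⟪e i, f⟫ ^ 2 := by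
        refine Finset.sum_le_sum fun i _ => ?_
        by_cases hi : i ∈ t
        · simp [hf i hi]
        · exact mul_le_mul_of_nonneg_right (hc i hi) (sq_nonneg _)
    _ ≤ M * ‖f‖ ^ 2 := by
        rw [← Finset.mul_sum]
        exact mul_le_mul_of_nonneg_left hbessel hM

lemma le_finiteRankForm_of_mem_span (he : Orthonormal ℝ e) {s : Finset ι} {m : ℝ}
    (hc : ∀ i ∈ s, m ≤ c i) {f : E} (hf : f ∈ Submodule.span ℝ (e '' s)) :
    m * ‖f‖ ^ 2 ≤ finiteRankForm e c f := by
  classical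
  have hout : ∀ i ∉ s, ⟪e i, f⟫ = 0 := by
    intro i hi
    refine (Submodule.mem_orthogonal_singleton_iff_inner_right.mp ?_)
    refine Submodule.span_le.mpr ?_ hf
    rintro _ ⟨k, hk, rfl⟩
    exact Submodule.mem_orthogonal_singleton_iff_inner_right.mpr
      (he.inner_eq_zero fun hik => hi (hik ▸ hk))
  have hparseval : ∑ i ∈ s, ⟪e i, f⟫ ^ 2 = ‖f‖ ^ 2 := by
    have hf' : f ∈ Submodule.span ℝ (s.image e : Set E) := by rwa [Finset.coe_image]
    have := (OrthonormalBasis.span he s).sum_sq_norm_inner_right ⟨f, hf'⟩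
    simp only [OrthonormalBasis.span_apply, Submodule.coe_inner, Real.norm_eq_abs, sq_abs] at this
    rwa [Finset.sum_coe_sort s (fun i => ⟪e i, f⟫ ^ 2)] at this
  calc m * ‖f‖ ^ 2 = ∑ i ∈ s, m * ⟪e i, f⟫ ^ 2 := by rw [← hparseval, Finset.mul_sum]
    _ ≤ ∑ i ∈ s, c i * ⟪e i, f⟫ ^ 2 := by
        gcongr with i hi
        exact hc i hi
    _ = finiteRankForm e c f :=
        Finset.sum_subset (Finset.subset_univ s) fun i _ hi => by simp [hout i hi]

lemma bddBelow_range_finiteRankForm_div (he : Orthonormal ℝ e) {p : E → Prop} :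
    BddBelow (range fun f : {f : E // p f} => finiteRankForm e c f.1 / ‖f.1‖ ^ 2) :=
  ⟨-∑ i, |c i|, by
    rintro _ ⟨f, rfl⟩
    exact (abs_le.mp (abs_finiteRankForm_div_le he f.1)).1⟩

lemma courantFischer_le (he : Orthonormal ℝ e) {t : Finset ι} {j : ℕ} (ht : t.card < j)
    {M : ℝ} (hM : 0 ≤ M) (hc : ∀ i ∉ t, c i ≤ M) :
    courantFischer (finiteRankForm e c) j ≤ M := by
  refine Real.iSup_le (fun ⟨V, hV⟩ => ?_) hM
  have : FiniteDimensional ℝ V := Module.finite_of_finrank_pos (by omega)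
  let L : V →ₗ[ℝ] (t → ℝ) := (LinearMap.pi fun i : t => innerₛₗ ℝ (e i)) ∘ₗ V.subtype
  obtain ⟨⟨f, hfV⟩, hfL, hne⟩ := Submodule.exists_mem_ne_zero_of_ne_bot
    (L.ker_ne_bot_of_finrank_lt (by simpa [hV] using ht))
  have hperp : ∀ i ∈ t, ⟪e i, f⟫ = 0 := fun i hi => congrFun hfL ⟨i, hi⟩
  have hf0 : f ≠ 0 := fun h => hne (Subtype.ext h)
  refine (ciInf_le (bddBelow_range_finiteRankForm_div he) ⟨f, hfV, hf0⟩).trans ?_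
  rw [div_le_iff₀ (by positivity)]
  exact finiteRankForm_le_of_inner_eq_zero he hM hc hperp

lemma le_courantFischer (he : Orthonormal ℝ e) {V : Submodule ℝ E} {j : ℕ}
    (hV : finrank ℝ V = j) (hj : j ≠ 0) {m : ℝ}
    (hm : ∀ f ∈ V, f ≠ 0 → m * ‖f‖ ^ 2 ≤ finiteRankForm e c f) :
    m ≤ courantFischer (finiteRankForm e c) j := by
  have hne : ∀ W : Submodule ℝ E, finrank ℝ W = j → ∃ f ∈ W, f ≠ 0 := fun W hW =>
    Submodule.exists_mem_ne_zero_of_ne_bot fun h => hj (by rw [← hW, h, finrank_bot])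
  have hbdd : BddAbove (range fun W : {W : Submodule ℝ E // finrank ℝ W = j} =>
      ⨅ f : {f : E // f ∈ W.1 ∧ f ≠ 0}, finiteRankForm e c f.1 / ‖f.1‖ ^ 2) := by
    refine ⟨∑ i, |c i|, ?_⟩
    rintro _ ⟨⟨W, hW⟩, rfl⟩
    obtain ⟨f, hfW, hf0⟩ := hne W hW
    exact (ciInf_le (bddBelow_range_finiteRankForm_div he) ⟨f, hfW, hf0⟩).trans
      (abs_le.mp (abs_finiteRankForm_div_le he f)).2
  have : Nonempty {f : E // f ∈ V ∧ f ≠ 0} :=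
    let ⟨f, hfV, hf0⟩ := hne V hV
    ⟨⟨f, hfV, hf0⟩⟩
  refine le_trans (le_ciInf fun f => ?_) (le_ciSup hbdd ⟨V, hV⟩)
  rw [le_div_iff₀ (by have := f.2.2; positivity)]
  exact hm f.1 f.2.1 f.2.2

lemma courantFischer_nonneg (he : Orthonormal ℝ e) (hE : ¬ FiniteDimensional ℝ E) {j : ℕ}
    (hj : j ≠ 0) : 0 ≤ courantFischer (finiteRankForm e c) j := by
  obtain ⟨V, hVker, hV⟩ :=
    exists_submodule_le_ker_finrank_eq hE (LinearMap.pi fun i => innerₛₗ ℝ (e i)) j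
  refine le_courantFischer he hV hj fun f hf _ => le_of_eq ?_
  have hperp : ∀ i, ⟪e i, f⟫ = 0 := fun i => congrFun (hVker hf) i
  simp [finiteRankForm, hperp]

end FiniteIndex

variable {n : ℕ} {e : Fin n → E} {c : Fin n → ℝ}

lemma le_courantFischer_succ (he : Orthonormal ℝ e) (hc : Antitone c) (j : Fin n) :
    c j ≤ courantFischer (finiteRankForm e c) (j + 1) := by
  classical
  refine le_courantFischer he (V := Submodule.span ℝ (e '' Finset.Iic j)) ?_ (j : ℕ).succ_ne_zero
    fun f hf _ => le_finiteRankForm_of_mem_span he (fun i hi => hc (Finset.mem_Iic.mp hi)) hf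
  rw [← Finset.coe_image, finrank_eq_card_basis (OrthonormalBasis.span he _).toBasis,
    Fintype.card_coe, Fin.card_Iic]

theorem courantFischer_finiteRankForm (he : Orthonormal ℝ e) (hc : Antitone c)
    (hE : ¬ FiniteDimensional ℝ E) :
    (∀ j : Fin n, courantFischer (finiteRankForm e c) (j + 1) = max (c j) 0) ∧
      ∀ j, n < j → courantFischer (finiteRankForm e c) j = 0 := by
  refine ⟨fun j => le_antisymm ?_ ?_, fun j hj => le_antisymm ?_ ?_⟩
  · refine courantFischer_le he (t := Finset.Iio j) (by simp) (le_max_right _ _) fun i hi => ?_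
    exact (hc (not_lt.mp (by simpa using hi))).trans (le_max_left _ _)
  · exact max_le (le_courantFischer_succ he hc j)
      (courantFischer_nonneg he hE (j : ℕ).succ_ne_zero)
  · exact courantFischer_le he (t := Finset.univ) (by simpa using hj) le_rfl (by simp)
  · exact courantFischer_nonneg he hE (by omega)

end CourantFischer

lemma mulVec_dotProduct_eq_sum_mul_sq {ι : Type*} [Fintype ι] [DecidableEq ι]
    {S : Matrix ι ι ℝ} {μ : ι → ℝ} {v : ι → ι → ℝ}
    (hortho : ∀ i j, ∑ k, v i k * v j k = if i = j then 1 else 0)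
    (heig : ∀ j, S *ᵥ v j = μ j • v j) (a : ι → ℝ) :
    S *ᵥ a ⬝ᵥ a = ∑ i, μ i * (v i ⬝ᵥ a) ^ 2 := by
  set V := Matrix.of v
  have hVVt : V * Vᵀ = 1 := by
    ext i j
    simpa [V, Matrix.mul_apply, Matrix.one_apply] using hortho i j
  have hSV : S * Vᵀ = Vᵀ * diagonal μ := by
    ext k i
    simpa [V, Matrix.mul_apply, Matrix.mulVec, dotProduct, diagonal_apply, mul_comm]
      using congrFun (heig i) k
  have hS : S = Vᵀ * diagonal μ * V := by
    rw [← hSV, Matrix.mul_assoc, mul_eq_one_comm.mp hVVt, Matrix.mul_one]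
  rw [hS, ← mulVec_mulVec, ← mulVec_mulVec, mulVec_transpose, ← dotProduct_mulVec]
  simp only [dotProduct, mulVec_diagonal, V, sq, mul_assoc]
  rfl

section Equipartition

variable {n : ℕ}

-- Half-open also for the last block, which changes `I_n` only at the null set `{1}`.
def blockInterval (n : ℕ) (k : Fin n) : Set ℝ := Ico ((k : ℝ) / n) (((k : ℝ) + 1) / n)

lemma measurableSet_blockInterval (k : Fin n) : MeasurableSet (blockInterval n k) :=
  measurableSet_Ico

lemma blockInterval_subset_Icc (k : Fin n) : blockInterval n k ⊆ Icc 0 1 := by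
  rintro u ⟨h1, h2⟩
  have hn : (0 : ℝ) < n := by exact_mod_cast k.pos
  refine ⟨le_trans (by positivity) h1, h2.le.trans ?_⟩
  rw [div_le_one hn]
  exact_mod_cast k.isLt

lemma idx_eq_of_mem_blockInterval (hn : 0 < n) {k : Fin n} {u : ℝ}
    (hu : u ∈ blockInterval n k) : idx n hn u = k := by
  obtain ⟨h1, h2⟩ := hu
  have hn' : (0 : ℝ) < n := by exact_mod_cast hn
  rw [div_le_iff₀ hn'] at h1
  rw [lt_div_iff₀ hn'] at h2
  have hfloor : ⌊n * u⌋₊ = k := by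
    rw [Nat.floor_eq_iff (by nlinarith)]
    constructor <;> linarith
  ext
  simp [idx, hfloor, Nat.le_sub_one_of_lt k.isLt]

lemma pairwise_disjoint_blockInterval : Pairwise (Function.onFun Disjoint (blockInterval n)) := by
  intro k l hkl
  wlog h : k < l generalizing k l
  · exact (this hkl.symm (lt_of_le_of_ne (not_lt.mp h) hkl.symm)).symm
  have : (k : ℝ) + 1 ≤ l := by exact_mod_cast h
  refine Ico_disjoint_Ico.mpr ((min_le_left _ _).trans (le_trans ?_ (le_max_right _ _)))
  gcongr

lemma iUnion_blockInterval (hn : 0 < n) : ⋃ k, blockInterval n k = Ico 0 1 := by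
  have hn' : (0 : ℝ) < n := by exact_mod_cast hn
  refine Subset.antisymm (iUnion_subset fun k u hu => ⟨(blockInterval_subset_Icc k hu).1, ?_⟩) ?_
  · refine hu.2.trans_le ?_
    rw [div_le_one hn']
    exact_mod_cast k.isLt
  · rintro u ⟨h0, h1⟩
    have hlt : ⌊n * u⌋₊ < n := (Nat.floor_lt (by positivity)).mpr (by nlinarith)
    refine mem_iUnion.mpr ⟨⟨_, hlt⟩, ?_, ?_⟩
    · rw [div_le_iff₀ hn']
      simpa [mul_comm] using Nat.floor_le (a := n * u) (by positivity)
    · rw [lt_div_iff₀ hn']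
      simpa [mul_comm] using Nat.lt_floor_add_one (n * u)

lemma measurable_comp_idx (hn : 0 < n) {α : Type*} [MeasurableSpace α] (g : Fin n → α) :
    Measurable fun u => g (idx n hn u) :=
  (measurable_from_top (f := fun m : ℕ =>
    g ⟨min (n - 1) m, (min_le_left _ _).trans_lt (Nat.sub_lt hn Nat.one_pos)⟩)).comp
    (measurable_const_mul (n : ℝ)).nat_floor

lemma integral_comp_idx_mul (hn : 0 < n) (g : Fin n → ℝ) {f : ℝ → ℝ}
    (hf : IntegrableOn f (Icc 0 1)) :
    ∫ u in Icc 0 1, g (idx n hn u) * f u = ∑ k, g k * ∫ u in blockInterval n k, f u := by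
  have hint : IntegrableOn (fun u => g (idx n hn u) * f u) (Icc 0 1) :=
    hf.bdd_mul (measurable_comp_idx hn g).aestronglyMeasurable
      (Filter.Eventually.of_forall fun u => Finset.single_le_sum
        (f := fun k => ‖g k‖) (fun k _ => norm_nonneg _) (Finset.mem_univ _))
  rw [integral_Icc_eq_integral_Ico, ← iUnion_blockInterval hn,
    integral_iUnion_fintype measurableSet_blockInterval pairwise_disjoint_blockInterval
      fun k => hint.mono_set (blockInterval_subset_Icc k)]
  refine Finset.sum_congr rfl fun k _ => ?_
  rw [← integral_const_mul]
  exact setIntegral_congr_fun (measurableSet_blockInterval k) fun u hu => by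
    rw [idx_eq_of_mem_blockInterval hn hu]

lemma integral_comp_idx (hn : 0 < n) (g : Fin n → ℝ) :
    ∫ u in Icc 0 1, g (idx n hn u) = (∑ k, g k) / n := by
  have hlength : ∀ k : Fin n, ∫ _ in blockInterval n k, (1 : ℝ) = 1 / n := fun k => by
    rw [setIntegral_const, smul_eq_mul, mul_one, blockInterval,
      Real.volume_real_Ico_of_le (by gcongr; linarith)]
    ring
  simpa [hlength, Finset.sum_mul, div_eq_mul_inv] using
    integral_comp_idx_mul hn g (f := fun _ => 1) (integrableOn_const (by simp))

noncomputable def blockIntegral (n : ℕ) (f : ℝ → ℝ) (k : Fin n) : ℝ :=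
  ∫ u in blockInterval n k, f u

lemma quadForm_inducedGraphon (hn : 0 < n) (S : Matrix (Fin n) (Fin n) ℝ) {f : ℝ → ℝ}
    (hf : IntegrableOn f (Icc 0 1)) :
    quadForm (inducedGraphon n hn S) f = S *ᵥ blockIntegral n f ⬝ᵥ blockIntegral n f := by
  have hinner : ∀ u, ∫ v in Icc 0 1, inducedGraphon n hn S u v * f v
      = (S *ᵥ blockIntegral n f) (idx n hn u) :=
    fun u => integral_comp_idx_mul hn (S (idx n hn u)) hf
  simp only [quadForm, hinner]
  exact integral_comp_idx_mul hn _ hf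

lemma memLp_stepFunction (hn : 0 < n) (w : Fin n → ℝ) :
    MemLp (fun u => √n * w (idx n hn u)) 2 (volume.restrict (Icc 0 1)) := by
  refine MemLp.of_bound ((measurable_comp_idx hn w).const_mul _).aestronglyMeasurable
    (√n * ∑ k, |w k|) (ae_of_all _ fun u => ?_)
  rw [Real.norm_eq_abs, abs_mul, abs_of_nonneg (Real.sqrt_nonneg _)]
  gcongr
  exact Finset.single_le_sum (f := fun k => |w k|) (fun k _ => abs_nonneg _) (Finset.mem_univ _)

-- The factor `√n` makes `stepLp n hn` an isometry from Euclidean `ℝⁿ` into `L²[0,1]`.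
noncomputable def stepLp (n : ℕ) (hn : 0 < n) (w : Fin n → ℝ) : L²[0,1] :=
  (memLp_stepFunction hn w).toLp _

lemma stepLp_ae_eq (hn : 0 < n) (w : Fin n → ℝ) :
    stepLp n hn w =ᵐ[volume.restrict (Icc 0 1)] fun u => √n * w (idx n hn u) :=
  MemLp.coeFn_toLp _

lemma inner_stepLp (hn : 0 < n) (w : Fin n → ℝ) (f : L²[0,1]) :
    ⟪stepLp n hn w, f⟫ = √n * (w ⬝ᵥ blockIntegral n f) :=
  calc ⟪stepLp n hn w, f⟫ = ∫ u in Icc 0 1, √n * (w (idx n hn u) * f u) := by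
        rw [L2.inner_def]
        refine integral_congr_ae ?_
        filter_upwards [stepLp_ae_eq hn w] with u hu
        rw [hu, Real.inner_apply, mul_assoc]
    _ = √n * (w ⬝ᵥ blockIntegral n f) := by
        rw [integral_const_mul, integral_comp_idx_mul hn w ((Lp.memLp f).integrable one_le_two)]
        rfl

lemma inner_stepLp_stepLp (hn : 0 < n) (w w' : Fin n → ℝ) :
    ⟪stepLp n hn w, stepLp n hn w'⟫ = w ⬝ᵥ w' := by
  have hn' : (0 : ℝ) < n := by exact_mod_cast hn
  rw [L2.inner_def]
  calc ∫ u in Icc 0 1, ⟪stepLp n hn w u, stepLp n hn w' u⟫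
      = ∫ u in Icc 0 1, n * (fun k => w k * w' k) (idx n hn u) := by
        refine integral_congr_ae ?_
        filter_upwards [stepLp_ae_eq hn w, stepLp_ae_eq hn w'] with u hu hu'
        rw [hu, hu', Real.inner_apply, mul_mul_mul_comm, Real.mul_self_sqrt hn'.le]
    _ = w ⬝ᵥ w' := by
        rw [integral_const_mul, integral_comp_idx hn (fun k => w k * w' k),
          mul_div_cancel₀ _ hn'.ne']
        rfl

lemma orthonormal_stepLp (hn : 0 < n) {v : Fin n → Fin n → ℝ}
    (hortho : ∀ i j, ∑ k, v i k * v j k = if i = j then 1 else 0) :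
    Orthonormal ℝ fun i => stepLp n hn (v i) :=
  orthonormal_iff_ite.mpr fun i j => (inner_stepLp_stepLp hn _ _).trans (hortho i j)

end Equipartition

lemma not_finiteDimensional_L2 : ¬ FiniteDimensional ℝ L²[0,1] := fun _ => by
  -- the normalized indicators of the `N` blocks are orthonormal, for every `N`
  set N := finrank ℝ L²[0,1] + 1
  have hortho := orthonormal_stepLp (by omega : 0 < N)
    (v := (1 : Matrix (Fin N) (Fin N) ℝ)) (by simp [Matrix.one_apply])
  have := hortho.linearIndependent.fintype_card_le_finrank
  simp [N] at this

lemma quadForm_eq_finiteRankForm {n : ℕ} (hn : 0 < n) {S : Matrix (Fin n) (Fin n) ℝ}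
    {μ : Fin n → ℝ} {v : Fin n → Fin n → ℝ}
    (hortho : ∀ i j, ∑ k, v i k * v j k = if i = j then 1 else 0)
    (heig : ∀ j, S *ᵥ v j = μ j • v j) (f : L²[0,1]) :
    quadForm (inducedGraphon n hn S) f
      = finiteRankForm (fun i => stepLp n hn (v i)) (fun i => μ i / n) f := by
  have hn' : (0 : ℝ) < n := by exact_mod_cast hn
  rw [quadForm_inducedGraphon hn S ((Lp.memLp f).integrable one_le_two),
    mulVec_dotProduct_eq_sum_mul_sq hortho heig, finiteRankForm]
  refine Finset.sum_congr rfl fun i _ => ?_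
  rw [inner_stepLp, mul_pow, Real.sq_sqrt hn'.le]
  field_simp

theorem stmt10_general (n : ℕ) (hn : 0 < n) (S : Matrix (Fin n) (Fin n) ℝ)
    (μ : Fin n → ℝ) (hmono : ∀ i j : Fin n, i ≤ j → μ j ≤ μ i)
    (v : Fin n → Fin n → ℝ)
    (hortho : ∀ i j, ∑ k, v i k * v j k = if i = j then 1 else 0)
    (heig : ∀ j, S.mulVec (v j) = μ j • v j) :
    (∀ j : Fin n, CF (inducedGraphon n hn S) ((j : ℕ) + 1) = max (μ j / n) 0) ∧
    (∀ j : ℕ, n < j → CF (inducedGraphon n hn S) j = 0) := by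
  have hCF : CF (inducedGraphon n hn S)
      = courantFischer (finiteRankForm (fun i => stepLp n hn (v i)) fun i => μ i / n) := by
    funext j
    simp only [CF, courantFischer, quadForm_eq_finiteRankForm hn hortho heig]
  rw [hCF]
  exact courantFischer_finiteRankForm (orthonormal_stepLp hn hortho)
    (fun i j hij => div_le_div_of_nonneg_right (hmono i j hij) n.cast_nonneg)
    not_finiteDimensional_L2

/-- If `S` is an `n × n` real symmetric matrix with eigenvalues `μ_1 ≥ … ≥ μ_n` (counted with
multiplicity, i.e. with an orthonormal eigenbasis `v`), then the Courant–Fischer values of the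
integral operator of the induced graphon `W_G` satisfy `Λ_j(T_{W_G}) = max(μ_j / n, 0)` for
`1 ≤ j ≤ n` and `Λ_j(T_{W_G}) = 0` for `j > n`. -/
theorem stmt10 (n : ℕ) (hn : 0 < n) (S : Matrix (Fin n) (Fin n) ℝ) (hS : S.IsSymm)
    (μ : Fin n → ℝ) (hmono : ∀ i j : Fin n, i ≤ j → μ j ≤ μ i)
    (v : Fin n → Fin n → ℝ)
    (hortho : ∀ i j, ∑ k, v i k * v j k = if i = j then 1 else 0)
    (heig : ∀ j, S.mulVec (v j) = μ j • v j) :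
    (∀ j : Fin n, CF (inducedGraphon n hn S) ((j : ℕ) + 1) = max (μ j / n) 0) ∧
    (∀ j : ℕ, n < j → CF (inducedGraphon n hn S) j = 0) :=
  stmt10_general n hn S μ hmono v hortho heig
end
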